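/- Under assumption (A): h ‖σ_L(v^±_h) n^±‖²_{L²(Γ₀)} ≤ C ‖v^±_h‖²_{V^±} for all discrete v^±_h, and for γ = γ₀ h with γ₀ > 0 sufficiently small, the stabilized bilinear form satisfies the lower bound M((u⁺_h, u⁻_h, λ_h); (u⁺_h, u⁻_h, −λ_h)) ≥ (α/2)(‖u⁺_h‖²_{V⁺} + ‖u⁻_h‖²_{V⁻}) + 2γ₀ h ‖λ_h‖²_{L²(Γ₀)}. -/

import Mathlib

/-- The stabilized bilinear form M of the augmented-Lagrangian formulation:
M((u⁺,u⁻,λ);(v⁺,v⁻,μ)) = a₀⁺(u⁺,v⁺) + a₀⁻(u⁻,v⁻) + ∫ λ·(v⁺−v⁻) + ∫ μ·(u⁺−u⁻)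
 − γ₀h ∫ (λ+σ_L(u⁺)n⁺)·(μ+σ_L(v⁺)n⁺) − γ₀h ∫ (λ−σ_L(u⁻)n⁻)·(μ−σ_L(v⁻)n⁻),
with trace maps Tp, Tm and stress-trace maps Sp v = σ_L(v)n⁺, Sm v = σ_L(v)n⁻
into L = L²(Γ₀). -/
noncomputable def MM {Vp Vm L : Type*}
    [NormedAddCommGroup Vp] [InnerProductSpace ℝ Vp]
    [NormedAddCommGroup Vm] [InnerProductSpace ℝ Vm]
    [NormedAddCommGroup L] [InnerProductSpace ℝ L]
    (a0p : Vp →ₗ[ℝ] Vp →ₗ[ℝ] ℝ) (a0m : Vm →ₗ[ℝ] Vm →ₗ[ℝ] ℝ)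
    (Tp Sp : Vp →ₗ[ℝ] L) (Tm Sm : Vm →ₗ[ℝ] L) (γ0 h : ℝ)
    (x y : Vp × Vm × L) : ℝ :=
  a0p x.1 y.1 + a0m x.2.1 y.2.1
    + (inner ℝ x.2.2 (Tp y.1 - Tm y.2.1) : ℝ)
    + (inner ℝ y.2.2 (Tp x.1 - Tm x.2.1) : ℝ)
    - γ0 * h * (inner ℝ (x.2.2 + Sp x.1) (y.2.2 + Sp y.1) : ℝ)
    - γ0 * h * (inner ℝ (x.2.2 - Sm x.2.1) (y.2.2 - Sm y.2.1) : ℝ)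

/-- The squared triple norm |||u⁺,u⁻,λ|||² = ‖u⁺‖² + ‖u⁻‖² + (1/h)‖u⁺−u⁻‖²_{L²(Γ₀)}
 + h‖λ‖²_{L²(Γ₀)}. -/
noncomputable def tripleNormSq {Vp Vm L : Type*}
    [NormedAddCommGroup Vp] [InnerProductSpace ℝ Vp]
    [NormedAddCommGroup Vm] [InnerProductSpace ℝ Vm]
    [NormedAddCommGroup L] [InnerProductSpace ℝ L]
    (Tp : Vp →ₗ[ℝ] L) (Tm : Vm →ₗ[ℝ] L) (h : ℝ) (x : Vp × Vm × L) : ℝ :=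
  ‖x.1‖ ^ 2 + ‖x.2.1‖ ^ 2 + (1 / h) * ‖Tp x.1 - Tm x.2.1‖ ^ 2 + h * ‖x.2.2‖ ^ 2

/-!
Testing against `(u⁺, u⁻, -λ)` makes the two coupling terms cancel, and the stabilization
terms become `γ₀ h (2‖λ‖² - ‖σ_L(u⁺)n⁺‖² - ‖σ_L(u⁻)n⁻‖²)`. By (A) the stress traces cost at
most `γ₀ C ‖u^±‖²`, which coercivity absorbs into `α/2 ‖u^±‖²` as soon as `γ₀ ≤ α / (2C)`.
-/

theorem MM_apply_neg_self {Vp Vm L : Type*}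
    [NormedAddCommGroup Vp] [InnerProductSpace ℝ Vp]
    [NormedAddCommGroup Vm] [InnerProductSpace ℝ Vm]
    [NormedAddCommGroup L] [InnerProductSpace ℝ L]
    (a0p : Vp →ₗ[ℝ] Vp →ₗ[ℝ] ℝ) (a0m : Vm →ₗ[ℝ] Vm →ₗ[ℝ] ℝ)
    (Tp Sp : Vp →ₗ[ℝ] L) (Tm Sm : Vm →ₗ[ℝ] L) (γ0 h : ℝ) (up : Vp) (um : Vm) (lam : L) :
    MM a0p a0m Tp Sp Tm Sm γ0 h (up, um, lam) (up, um, -lam)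
      = a0p up up + a0m um um - γ0 * h * (‖Sp up‖ ^ 2 + ‖Sm um‖ ^ 2)
        + 2 * γ0 * h * ‖lam‖ ^ 2 := by
  simp only [MM, inner_add_left, inner_add_right, inner_sub_left, inner_sub_right,
    inner_neg_left, inner_neg_right, real_inner_self_eq_norm_sq,
    real_inner_comm (Sp up) lam, real_inner_comm (Sm um) lam]
  ring

theorem half_coercive_sub_stabilization {E F : Type*}
    [NormedAddCommGroup E] [Module ℝ E] [NormedAddCommGroup F] [Module ℝ F]
    (a : E →ₗ[ℝ] E →ₗ[ℝ] ℝ) (S : E →ₗ[ℝ] F) {α C γ0 h : ℝ} {v : E}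
    (hcoer : a v v ≥ α * ‖v‖ ^ 2) (hS : h * ‖S v‖ ^ 2 ≤ C * ‖v‖ ^ 2)
    (hγ0 : 0 ≤ γ0) (hγC : γ0 * C ≤ α / 2) :
    α / 2 * ‖v‖ ^ 2 ≤ a v v - γ0 * h * ‖S v‖ ^ 2 :=
  calc α / 2 * ‖v‖ ^ 2 ≤ α * ‖v‖ ^ 2 - γ0 * C * ‖v‖ ^ 2 := by nlinarith [sq_nonneg ‖v‖]
    _ = α * ‖v‖ ^ 2 - γ0 * (C * ‖v‖ ^ 2) := by ring
    _ ≤ a v v - γ0 * (h * ‖S v‖ ^ 2) := by gcongr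
    _ = a v v - γ0 * h * ‖S v‖ ^ 2 := by ring

theorem stmt10_general {Vp Vm L : Type*}
    [NormedAddCommGroup Vp] [InnerProductSpace ℝ Vp]
    [NormedAddCommGroup Vm] [InnerProductSpace ℝ Vm]
    [NormedAddCommGroup L] [InnerProductSpace ℝ L]
    (a0p : Vp →ₗ[ℝ] Vp →ₗ[ℝ] ℝ) (a0m : Vm →ₗ[ℝ] Vm →ₗ[ℝ] ℝ)
    (Tp Sp : Vp →ₗ[ℝ] L) (Tm Sm : Vm →ₗ[ℝ] L)
    (Vph : Submodule ℝ Vp) (Vmh : Submodule ℝ Vm) (Wh : Submodule ℝ L)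
    (α CA : ℝ) (hα : 0 < α) (hCA : 0 < CA)
    (hcoerp : ∀ v ∈ Vph, a0p v v ≥ α * ‖v‖ ^ 2)
    (hcoerm : ∀ v ∈ Vmh, a0m v v ≥ α * ‖v‖ ^ 2)
    (h : ℝ)
    -- assumption (A)
    (hAp : ∀ v ∈ Vph, h * ‖Sp v‖ ^ 2 ≤ CA * ‖v‖ ^ 2)
    (hAm : ∀ v ∈ Vmh, h * ‖Sm v‖ ^ 2 ≤ CA * ‖v‖ ^ 2) :
    ∃ γstar > 0, ∀ γ0 : ℝ, 0 < γ0 → γ0 ≤ γstar →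
      ∀ uph ∈ Vph, ∀ umh ∈ Vmh, ∀ lamh ∈ Wh,
        MM a0p a0m Tp Sp Tm Sm γ0 h (uph, umh, lamh) (uph, umh, -lamh)
          ≥ α / 2 * (‖uph‖ ^ 2 + ‖umh‖ ^ 2) + 2 * γ0 * h * ‖lamh‖ ^ 2 := by
  refine ⟨α / (2 * CA), by positivity, fun γ0 hγ0 hγ uph hup umh hum lamh _ => ?_⟩
  have hγC : γ0 * CA ≤ α / 2 := by
    rw [le_div_iff₀ (by positivity)] at hγ
    linarith
  have hp := half_coercive_sub_stabilization a0p Sp (hcoerp uph hup) (hAp uph hup) hγ0.le hγC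
  have hm := half_coercive_sub_stabilization a0m Sm (hcoerm umh hum) (hAm umh hum) hγ0.le hγC
  rw [MM_apply_neg_self]
  linarith

/-- under assumption (A) and for γ = γ₀h with γ₀ > 0 small enough,
M((u⁺_h,u⁻_h,λ_h);(u⁺_h,u⁻_h,−λ_h)) ≥ (α/2)(‖u⁺_h‖² + ‖u⁻_h‖²) + 2γ₀h‖λ_h‖². -/
theorem stmt10 {Vp Vm L : Type*}
    [NormedAddCommGroup Vp] [InnerProductSpace ℝ Vp]
    [NormedAddCommGroup Vm] [InnerProductSpace ℝ Vm]
    [NormedAddCommGroup L] [InnerProductSpace ℝ L]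
    (a0p : Vp →ₗ[ℝ] Vp →ₗ[ℝ] ℝ) (a0m : Vm →ₗ[ℝ] Vm →ₗ[ℝ] ℝ)
    (Tp Sp : Vp →ₗ[ℝ] L) (Tm Sm : Vm →ₗ[ℝ] L)
    (Vph : Submodule ℝ Vp) (Vmh : Submodule ℝ Vm) (Wh : Submodule ℝ L)
    (α CA : ℝ) (hα : 0 < α) (hCA : 0 < CA)
    (hcoerp : ∀ v ∈ Vph, a0p v v ≥ α * ‖v‖ ^ 2)
    (hcoerm : ∀ v ∈ Vmh, a0m v v ≥ α * ‖v‖ ^ 2)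
    (h : ℝ) (hh : 0 < h)
    -- assumption (A)
    (hAp : ∀ v ∈ Vph, h * ‖Sp v‖ ^ 2 ≤ CA * ‖v‖ ^ 2)
    (hAm : ∀ v ∈ Vmh, h * ‖Sm v‖ ^ 2 ≤ CA * ‖v‖ ^ 2) :
    ∃ γstar > 0, ∀ γ0 : ℝ, 0 < γ0 → γ0 ≤ γstar →
      ∀ uph ∈ Vph, ∀ umh ∈ Vmh, ∀ lamh ∈ Wh,
        MM a0p a0m Tp Sp Tm Sm γ0 h (uph, umh, lamh) (uph, umh, -lamh)
          ≥ α / 2 * (‖uph‖ ^ 2 + ‖umh‖ ^ 2) + 2 * γ0 * h * ‖lamh‖ ^ 2 :=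
  stmt10_general a0p a0m Tp Sp Tm Sm Vph Vmh Wh α CA hα hCA hcoerp hcoerm h hAp hAm
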